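/- For a symmetric lax monoidal functor F : C ⥤ D with a formal deformation (μ_0, μ_1, …), the skew-symmetrization π := μ_1 - F(σ_C)μ_1σ_D of the first-order term satisfies the derivation identity: π^{X,Y⊗Z}(id ⊗ μ^{Y,Z}) - μ^{X⊗Y,Z}(π^{X,Y} ⊗ id) = F(σ_C^{Y,X} ⊗ id) μ^{Y,X⊗Z}(id ⊗ π^{X,Z})(σ_D^{FX,FY} ⊗ id), using only the order-1 deformation equation dμ_1 = 0 and the symmetry of μ = μ_0. -/

import Mathlib

open CategoryTheory MonoidalCategory Functor.LaxMonoidal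

namespace MonoidalHochschild

variable {C D : Type*} [Category C] [Category D] [MonoidalCategory C] [MonoidalCategory D]
  [Preadditive D] [MonoidalPreadditive D]

variable (F : C ⥤ D) [F.LaxMonoidal]

/-- A Hochschild `2`-cochain of the monoidal functor `F`: a family of morphisms
`F X ⊗ F Y ⟶ F (X ⊗ Y)` (naturality is imposed separately). -/
abbrev Fam2 := ∀ X Y : C, F.obj X ⊗ F.obj Y ⟶ F.obj (X ⊗ Y)

/-- Naturality of a `1`-cochain. -/
def Nat1 (b : ∀ X : C, F.obj X ⟶ F.obj X) : Prop :=
  ∀ {X Y : C} (f : X ⟶ Y), b X ≫ F.map f = F.map f ≫ b Y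

/-- Naturality of a `2`-cochain. -/
def Nat2 (c : Fam2 F) : Prop :=
  ∀ {X X' Y Y' : C} (f : X ⟶ X') (g : Y ⟶ Y'),
    (F.map f ⊗ₘ F.map g) ≫ c X' Y' = c X Y ≫ F.map (f ⊗ₘ g)

/-- The Hochschild differential on `1`-cochains:
`(db)^{X,Y} = b^{X⊗Y} ∘ μ^{X,Y} - μ^{X,Y} ∘ (b^X ⊗ id) - μ^{X,Y} ∘ (id ⊗ b^Y)`. -/
def d1 (b : ∀ X : C, F.obj X ⟶ F.obj X) : Fam2 F := fun X Y =>
  μ F X Y ≫ b (X ⊗ Y) - (b X ▷ F.obj Y) ≫ μ F X Y - (F.obj X ◁ b Y) ≫ μ F X Y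

/-- The Hochschild differential on `2`-cochains (associators made explicit):
`(dc)^{X,Y,Z} = -μ(id ⊗ c) + c^{X⊗Y,Z}(μ ⊗ id) - c^{X,Y⊗Z}(id ⊗ μ) + μ(c ⊗ id)`. -/
def d2 (c : Fam2 F) :
    ∀ X Y Z : C, F.obj X ⊗ (F.obj Y ⊗ F.obj Z) ⟶ F.obj (X ⊗ (Y ⊗ Z)) := fun X Y Z =>
  - ((F.obj X ◁ c Y Z) ≫ μ F X (Y ⊗ Z))
  + ((α_ (F.obj X) (F.obj Y) (F.obj Z)).inv ≫ (μ F X Y ▷ F.obj Z) ≫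
      c (X ⊗ Y) Z ≫ F.map (α_ X Y Z).hom)
  - ((F.obj X ◁ μ F Y Z) ≫ c X (Y ⊗ Z))
  + ((α_ (F.obj X) (F.obj Y) (F.obj Z)).inv ≫ (c X Y ▷ F.obj Z) ≫
      μ F (X ⊗ Y) Z ≫ F.map (α_ X Y Z).hom)

/-- The Hochschild differential on `3`-cochains (associators made explicit):
`(dc)^{W,X,Y,Z} = μ(id⊗c) - c(μ⊗id⊗id) + c(id⊗μ⊗id) - c(id⊗id⊗μ) + μ(c⊗id)`. -/
def d3 (c : ∀ X Y Z : C, F.obj X ⊗ (F.obj Y ⊗ F.obj Z) ⟶ F.obj (X ⊗ (Y ⊗ Z))) :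
    ∀ W X Y Z : C,
      F.obj W ⊗ (F.obj X ⊗ (F.obj Y ⊗ F.obj Z)) ⟶ F.obj (W ⊗ (X ⊗ (Y ⊗ Z))) :=
  fun W X Y Z =>
  ((F.obj W ◁ c X Y Z) ≫ μ F W (X ⊗ (Y ⊗ Z)))
  - ((α_ (F.obj W) (F.obj X) (F.obj Y ⊗ F.obj Z)).inv ≫ ((μ F W X) ▷ (F.obj Y ⊗ F.obj Z)) ≫
      c (W ⊗ X) Y Z ≫ F.map (α_ W X (Y ⊗ Z)).hom)
  + ((F.obj W ◁ ((α_ (F.obj X) (F.obj Y) (F.obj Z)).inv ≫ (μ F X Y ▷ F.obj Z))) ≫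
      c W (X ⊗ Y) Z ≫ F.map (W ◁ (α_ X Y Z).hom))
  - ((F.obj W ◁ (F.obj X ◁ μ F Y Z)) ≫ c W X (Y ⊗ Z))
  + ((F.obj W ◁ (α_ (F.obj X) (F.obj Y) (F.obj Z)).inv) ≫
      (α_ (F.obj W) (F.obj X ⊗ F.obj Y) (F.obj Z)).inv ≫
      (c W X Y ▷ F.obj Z) ≫ μ F (W ⊗ (X ⊗ Y)) Z ≫
      F.map ((α_ W (X ⊗ Y) Z).hom ≫ (W ◁ (α_ X Y Z).hom)))

end MonoidalHochschild

open CategoryTheory MonoidalCategory Functor.LaxMonoidal MonoidalHochschild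

namespace MonoidalHochschild

variable {C D : Type*} [Category C] [Category D] [MonoidalCategory C] [MonoidalCategory D]
  [SymmetricCategory C] [SymmetricCategory D] [Preadditive D] [MonoidalPreadditive D]
  (F : C ⥤ D) [F.LaxMonoidal]

/-- `F` is a symmetric lax monoidal functor:
`F(σ_C^{X,Y}) ∘ μ^{X,Y} = μ^{Y,X} ∘ σ_D^{FX,FY}`. -/
def IsSymmetric : Prop :=
  ∀ X Y : C, μ F X Y ≫ F.map (β_ X Y).hom = (β_ (F.obj X) (F.obj Y)).hom ≫ μ F Y X

/-- Skew symmetry of a bifunctor transformation `π`: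
`π^{X,Y} = - F(σ_C^{Y,X}) ∘ π^{Y,X} ∘ σ_D^{FX,FY}`. -/
def Skew (π : Fam2 F) : Prop :=
  ∀ X Y : C, π X Y =
    - ((β_ (F.obj X) (F.obj Y)).hom ≫ π Y X ≫ F.map (β_ Y X).hom)

/-- The functorial Jacobi identity for `π` (associators made explicit):
`π^{X,Y⊗Z}(id ⊗ π^{Y,Z}) - π^{X⊗Y,Z}(π^{X,Y} ⊗ id)
  = F(σ_C^{Y,X} ⊗ id) π^{Y,X⊗Z}(id ⊗ π^{X,Z})(σ_D^{FX,FY} ⊗ id)`. -/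
def JacobiId (π : Fam2 F) : Prop :=
  ∀ X Y Z : C,
    (F.obj X ◁ π Y Z) ≫ π X (Y ⊗ Z)
      - (α_ (F.obj X) (F.obj Y) (F.obj Z)).inv ≫ (π X Y ▷ F.obj Z) ≫
          π (X ⊗ Y) Z ≫ F.map (α_ X Y Z).hom =
    (α_ (F.obj X) (F.obj Y) (F.obj Z)).inv ≫
      ((β_ (F.obj X) (F.obj Y)).hom ▷ F.obj Z) ≫
      (α_ (F.obj Y) (F.obj X) (F.obj Z)).hom ≫
      (F.obj Y ◁ π X Z) ≫ π Y (X ⊗ Z) ≫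
      F.map ((α_ Y X Z).inv ≫ ((β_ Y X).hom ▷ Z) ≫ (α_ X Y Z).hom)

/-- The functorial derivation identity for `π` with respect to `μ`:
`π^{X,Y⊗Z}(id ⊗ μ^{Y,Z}) - μ^{X⊗Y,Z}(π^{X,Y} ⊗ id)
  = F(σ_C^{Y,X} ⊗ id) μ^{Y,X⊗Z}(id ⊗ π^{X,Z})(σ_D^{FX,FY} ⊗ id)`. -/
def DerivationId (π : Fam2 F) : Prop :=
  ∀ X Y Z : C,
    (F.obj X ◁ μ F Y Z) ≫ π X (Y ⊗ Z)
      - (α_ (F.obj X) (F.obj Y) (F.obj Z)).inv ≫ (π X Y ▷ F.obj Z) ≫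
          μ F (X ⊗ Y) Z ≫ F.map (α_ X Y Z).hom =
    (α_ (F.obj X) (F.obj Y) (F.obj Z)).inv ≫
      ((β_ (F.obj X) (F.obj Y)).hom ▷ F.obj Z) ≫
      (α_ (F.obj Y) (F.obj X) (F.obj Z)).hom ≫
      (F.obj Y ◁ π X Z) ≫ μ F Y (X ⊗ Z) ≫
      F.map ((α_ Y X Z).inv ≫ ((β_ Y X).hom ▷ Z) ≫ (α_ X Y Z).hom)

end MonoidalHochschild

open MonoidalHochschild

/-!
The cocycle condition `dμ₁ = 0` is an identity of 3-cochains,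
`μ₁ ∘₂ μ + μ ∘₂ μ₁ = μ₁ ∘₁ μ + μ ∘₁ μ₁`. Conjugating it by the braiding that exchanges the first
two tensor factors, and by the one that rotates all three, gives two more identities of the same
shape; naturality of `μ₁` and symmetry of `μ` show that the only effect of the conjugation is to
replace some occurrences of `μ₁` by its transpose `F(σ) μ₁ σ`. The derivation identity for
`π = μ₁ - F(σ) μ₁ σ` is the first identity minus the second plus the third.
-/

namespace CategoryTheory.MonoidalPreadditive

variable {D : Type*} [Category D] [MonoidalCategory D] [Preadditive D] [MonoidalPreadditive D]

theorem whiskerLeft_sub (P : D) {Q R : D} (f g : Q ⟶ R) : P ◁ (f - g) = P ◁ f - P ◁ g :=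
  (tensorLeft P).map_sub

theorem sub_whiskerRight {Q R : D} (f g : Q ⟶ R) (P : D) : (f - g) ▷ P = f ▷ P - g ▷ P :=
  (tensorRight P).map_sub

end CategoryTheory.MonoidalPreadditive

namespace MonoidalHochschild

theorem nat2_μ {C D : Type*} [Category C] [Category D] [MonoidalCategory C] [MonoidalCategory D]
    (F : C ⥤ D) [F.LaxMonoidal] : Nat2 F (μ F) :=
  μ_natural F

section Braided

variable {C D : Type*} [Category C] [Category D] [MonoidalCategory C] [MonoidalCategory D]
  [BraidedCategory C] [BraidedCategory D] (F : C ⥤ D)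

abbrev Fam3 := ∀ X Y Z : C, F.obj X ⊗ (F.obj Y ⊗ F.obj Z) ⟶ F.obj (X ⊗ (Y ⊗ Z))

def transpose (c : Fam2 F) : Fam2 F := fun X Y =>
  (β_ (F.obj X) (F.obj Y)).hom ≫ c Y X ≫ F.map (β_ Y X).hom

/- Gerstenhaber's partial compositions `c ∘₁ b = c (b ⊗ id)` and `c ∘₂ b = c (id ⊗ b)`,
with the associators made explicit as in `d2`. -/
def comp₁ (c b : Fam2 F) : Fam3 F := fun X Y Z =>
  (α_ (F.obj X) (F.obj Y) (F.obj Z)).inv ≫ (b X Y ▷ F.obj Z) ≫ c (X ⊗ Y) Z ≫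
    F.map (α_ X Y Z).hom

def comp₂ (c b : Fam2 F) : Fam3 F := fun X Y Z =>
  (F.obj X ◁ b Y Z) ≫ c X (Y ⊗ Z)

/- The transposition `(1 2)` and the cycle `(1 2 3)` act on 3-cochains by conjugation with
the corresponding braidings of `D` and `C`. -/
def swap12 (h : Fam3 F) : Fam3 F := fun X Y Z =>
  (α_ (F.obj X) (F.obj Y) (F.obj Z)).inv ≫ ((β_ (F.obj X) (F.obj Y)).hom ▷ F.obj Z) ≫
    (α_ (F.obj Y) (F.obj X) (F.obj Z)).hom ≫ h Y X Z ≫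
    F.map ((α_ Y X Z).inv ≫ ((β_ Y X).hom ▷ Z) ≫ (α_ X Y Z).hom)

def rotate (h : Fam3 F) : Fam3 F := fun X Y Z =>
  (β_ (F.obj X) (F.obj Y ⊗ F.obj Z)).hom ≫ (α_ (F.obj Y) (F.obj Z) (F.obj X)).hom ≫
    h Y Z X ≫ F.map ((α_ Y Z X).inv ≫ (β_ (Y ⊗ Z) X).hom)

variable {F}

theorem swap12_comp₁ {c : Fam2 F} (hc : Nat2 F c) (b : Fam2 F) :
    swap12 F (comp₁ F c b) = comp₁ F c (transpose F b) := by
  funext X Y Z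
  have hcβ : (F.map (β_ Y X).hom ▷ F.obj Z) ≫ c (X ⊗ Y) Z =
      c (Y ⊗ X) Z ≫ F.map ((β_ Y X).hom ▷ Z) := by
    simpa using hc (β_ Y X).hom (𝟙 Z)
  simp [swap12, comp₁, transpose, reassoc_of% hcβ]

theorem rotate_comp₁ (c b : Fam2 F) :
    rotate F (comp₁ F c b) = comp₂ F (transpose F c) b := by
  funext X Y Z
  simp [rotate, comp₁, comp₂, transpose, BraidedCategory.braiding_naturality_right_assoc]

theorem rotate_comp₂ {c : Fam2 F} (hc : Nat2 F c) (b : Fam2 F) :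
    rotate F (comp₂ F c b) = swap12 F (comp₂ F c (transpose F b)) := by
  funext X Y Z
  have hcβ : (F.obj Y ◁ F.map (β_ Z X).hom) ≫ c Y (X ⊗ Z) =
      c Y (Z ⊗ X) ≫ F.map (Y ◁ (β_ Z X).hom) := by
    simpa using hc (𝟙 Y) (β_ Z X).hom
  have hexC : (Y ◁ (β_ Z X).hom) ≫ (α_ Y X Z).inv ≫ ((β_ Y X).hom ▷ Z) ≫ (α_ X Y Z).hom
      = (α_ Y Z X).inv ≫ (β_ (Y ⊗ Z) X).hom := by
    rw [← reassoc_of% (BraidedCategory.hexagon_reverse Y Z X)]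
    simp
  have hexD : (α_ (F.obj X) (F.obj Y) (F.obj Z)).inv ≫ ((β_ (F.obj X) (F.obj Y)).hom ▷ F.obj Z) ≫
      (α_ (F.obj Y) (F.obj X) (F.obj Z)).hom ≫ (F.obj Y ◁ (β_ (F.obj X) (F.obj Z)).hom)
      = (β_ (F.obj X) (F.obj Y ⊗ F.obj Z)).hom ≫ (α_ (F.obj Y) (F.obj Z) (F.obj X)).hom := by
    rw [← BraidedCategory.hexagon_forward (F.obj X) (F.obj Y) (F.obj Z)]
    simp
  simp only [rotate, swap12, comp₂, transpose, whiskerLeft_comp, Category.assoc,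
    reassoc_of% hcβ, reassoc_of% hexD, ← F.map_comp, hexC]

end Braided

section Preadditive

variable {C D : Type*} [Category C] [Category D] [MonoidalCategory C] [MonoidalCategory D]
  [Preadditive D] {F : C ⥤ D}

theorem comp₂_sub_left (c c' b : Fam2 F) : comp₂ F (c - c') b = comp₂ F c b - comp₂ F c' b := by
  funext X Y Z
  exact Preadditive.comp_sub _ _ _

section Braided

variable [BraidedCategory C] [BraidedCategory D]

theorem swap12_add (h h' : Fam3 F) : swap12 F (h + h') = swap12 F h + swap12 F h' := by
  funext X Y Z
  simp [swap12]

theorem swap12_sub (h h' : Fam3 F) : swap12 F (h - h') = swap12 F h - swap12 F h' := by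
  funext X Y Z
  simp [swap12]

theorem rotate_add (h h' : Fam3 F) : rotate F (h + h') = rotate F h + rotate F h' := by
  funext X Y Z
  simp [rotate]

end Braided

variable [MonoidalPreadditive D]

theorem comp₂_sub_right (c b b' : Fam2 F) : comp₂ F c (b - b') = comp₂ F c b - comp₂ F c b' := by
  funext X Y Z
  simp [comp₂, MonoidalPreadditive.whiskerLeft_sub]

theorem comp₁_sub_right (c b b' : Fam2 F) : comp₁ F c (b - b') = comp₁ F c b - comp₁ F c b' := by
  funext X Y Z
  simp [comp₁, MonoidalPreadditive.sub_whiskerRight]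

end Preadditive

section Symmetric

variable {C D : Type*} [Category C] [Category D] [MonoidalCategory C] [MonoidalCategory D]
  [SymmetricCategory C] [SymmetricCategory D] {F : C ⥤ D} [F.LaxMonoidal]

theorem transpose_μ (hF : IsSymmetric F) : transpose F (μ F) = μ F := by
  funext X Y
  rw [transpose, ← reassoc_of% (hF X Y), ← F.map_comp, SymmetricCategory.symmetry,
    F.map_id, Category.comp_id]

theorem derivationId_iff [Preadditive D] [MonoidalPreadditive D] (π : Fam2 F) :
    DerivationId F π ↔ comp₂ F π (μ F) - comp₁ F (μ F) π = swap12 F (comp₂ F (μ F) π) := by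
  simp only [DerivationId, funext_iff, Pi.sub_apply, comp₁, comp₂, swap12, Category.assoc]

end Symmetric

end MonoidalHochschild

theorem skew_symmetrization_satisfies_derivation_general
    {C D : Type*} [Category C] [Category D] [MonoidalCategory C] [MonoidalCategory D]
    [SymmetricCategory C] [SymmetricCategory D]
    [Abelian D] [MonoidalPreadditive D]
    (F : C ⥤ D) [F.LaxMonoidal]
    (hFsym : IsSymmetric F)
    (μ₁ : Fam2 F) (hnat : Nat2 F μ₁)
    (hdef : ∀ X Y Z : C,
      (F.obj X ◁ μ F Y Z) ≫ μ₁ X (Y ⊗ Z) + (F.obj X ◁ μ₁ Y Z) ≫ μ F X (Y ⊗ Z) =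
      (α_ (F.obj X) (F.obj Y) (F.obj Z)).inv ≫ (μ F X Y ▷ F.obj Z) ≫
          μ₁ (X ⊗ Y) Z ≫ F.map (α_ X Y Z).hom
        + (α_ (F.obj X) (F.obj Y) (F.obj Z)).inv ≫ (μ₁ X Y ▷ F.obj Z) ≫
          μ F (X ⊗ Y) Z ≫ F.map (α_ X Y Z).hom) :
    letI π : Fam2 F := fun X Y =>
      μ₁ X Y - (β_ (F.obj X) (F.obj Y)).hom ≫ μ₁ Y X ≫ F.map (β_ Y X).hom
    DerivationId F π := by
  refine (derivationId_iff (μ₁ - transpose F μ₁)).2 ?_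
  have hcocycle : comp₂ F μ₁ (μ F) + comp₂ F (μ F) μ₁ =
      comp₁ F μ₁ (μ F) + comp₁ F (μ F) μ₁ :=
    funext₃ hdef
  have hswap := congrArg (swap12 F) hcocycle
  rw [swap12_add, swap12_add, swap12_comp₁ hnat, swap12_comp₁ (nat2_μ F),
    transpose_μ hFsym] at hswap
  have hrot := congrArg (rotate F) hcocycle
  rw [rotate_add, rotate_add, rotate_comp₂ hnat, rotate_comp₂ (nat2_μ F), rotate_comp₁,
    rotate_comp₁, transpose_μ hFsym] at hrot
  rw [comp₂_sub_left, comp₁_sub_right, comp₂_sub_right, swap12_sub]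
  linear_combination (norm := module) hcocycle - hswap + hrot

/-- For a symmetric lax monoidal functor `F` with a first-order deformation
term `μ₁` satisfying only the order-1 deformation equation (`dμ₁ = 0`), the skew-symmetrization
`π = μ₁ - F(σ_C)μ₁σ_D` satisfies the functorial derivation identity
`π^{X,Y⊗Z}(id ⊗ μ^{Y,Z}) - μ^{X⊗Y,Z}(π^{X,Y} ⊗ id)
  = F(σ_C^{Y,X} ⊗ id) μ^{Y,X⊗Z}(id ⊗ π^{X,Z})(σ_D^{FX,FY} ⊗ id)`. -/
theorem skew_symmetrization_satisfies_derivation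
    {C D : Type*} [Category C] [Category D] [MonoidalCategory C] [MonoidalCategory D]
    [SymmetricCategory C] [SymmetricCategory D]
    [Abelian C] [Abelian D] [MonoidalPreadditive C] [MonoidalPreadditive D]
    (F : C ⥤ D) [F.LaxMonoidal]
    (hFsym : IsSymmetric F)
    (μ₁ : Fam2 F) (hnat : Nat2 F μ₁)
    (hdef : ∀ X Y Z : C,
      (F.obj X ◁ μ F Y Z) ≫ μ₁ X (Y ⊗ Z) + (F.obj X ◁ μ₁ Y Z) ≫ μ F X (Y ⊗ Z) =
      (α_ (F.obj X) (F.obj Y) (F.obj Z)).inv ≫ (μ F X Y ▷ F.obj Z) ≫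
          μ₁ (X ⊗ Y) Z ≫ F.map (α_ X Y Z).hom
        + (α_ (F.obj X) (F.obj Y) (F.obj Z)).inv ≫ (μ₁ X Y ▷ F.obj Z) ≫
          μ F (X ⊗ Y) Z ≫ F.map (α_ X Y Z).hom) :
    letI π : Fam2 F := fun X Y =>
      μ₁ X Y - (β_ (F.obj X) (F.obj Y)).hom ≫ μ₁ Y X ≫ F.map (β_ Y X).hom
    DerivationId F π :=
  skew_symmetrization_satisfies_derivation_general F hFsym μ₁ hnat hdef
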